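/- Let n, k, ℓ be positive integers with 2k+2 ≤ n−ℓ. Let G and H be n-vertex simple graphs having the same (n−ℓ)-deck. Suppose every (n−ℓ)-vertex induced subgraph of G is acyclic, has radius greater than k, and does not have diameter 2k+1. Then G and H have the same number of k-central edges. -/

import Mathlib

open SimpleGraph

/-- The eccentricity (`ℕ∞`-valued) of a vertex: supremum of extended distances to
all vertices.  It is infinite if the graph is disconnected. -/
noncomputable def eccent {V : Type*} (G : SimpleGraph V) (v : V) : ℕ∞ :=
  ⨆ w, G.edist v w

/-- The radius (`ℕ∞`-valued) of a graph: minimum eccentricity. -/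
noncomputable def gradius {V : Type*} (G : SimpleGraph V) : ℕ∞ :=
  ⨅ v, _root_.eccent G v

/-- The diameter (`ℕ∞`-valued) of a graph: maximum distance between two vertices. -/
noncomputable def gdiam {V : Type*} (G : SimpleGraph V) : ℕ∞ :=
  ⨆ v, ⨆ w, G.edist v w

/-- Two graphs on `Fin n` have the same `k`-deck: there is a bijection `φ` between the
`k`-element vertex subsets such that for each subset `s` the subgraph induced by `s` in the
first graph is isomorphic to the subgraph induced by `φ s` in the second. -/
def SameDeck {n : ℕ} (G H : SimpleGraph (Fin n)) (k : ℕ) : Prop :=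
  ∃ φ : {s : Finset (Fin n) // s.card = k} ≃ {s : Finset (Fin n) // s.card = k},
    ∀ s : {s : Finset (Fin n) // s.card = k},
      Nonempty ((SimpleGraph.induce (↑s.1 : Set (Fin n)) G) ≃g
                (SimpleGraph.induce (↑(φ s).1 : Set (Fin n)) H))

/-- A `k`-evine: a tree with diameter exactly `2k+1`. -/
def IsEvine {V : Type*} (k : ℕ) (A : SimpleGraph V) : Prop :=
  A.IsTree ∧ gdiam A = ((2 * k + 1 : ℕ) : ℕ∞)

/-- The `k`-eball at an edge `uv` of `G`: the subgraph induced by all vertices at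
distance at most `k` from `u` or from `v`. -/
def kEball {V : Type*} (G : SimpleGraph V) (u v : V) (k : ℕ) : G.Subgraph :=
  (⊤ : G.Subgraph).induce {w | G.edist u w ≤ (k : ℕ∞) ∨ G.edist v w ≤ (k : ℕ∞)}

/-- A `k`-central edge of `G`: an edge `uv` whose `k`-eball contains a `k`-evine
whose central edge is `uv` (its two endpoints having eccentricity `k+1` in the evine). -/
def IsKCentralEdge {V : Type*} (k : ℕ) (G : SimpleGraph V) (u v : V) : Prop :=
  G.Adj u v ∧ ∃ (B : G.Subgraph) (hu : u ∈ B.verts) (hv : v ∈ B.verts),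
    B ≤ kEball G u v k ∧ IsEvine k B.coe ∧ B.Adj u v ∧
    _root_.eccent B.coe ⟨u, hu⟩ = ((k + 1 : ℕ) : ℕ∞) ∧
    _root_.eccent B.coe ⟨v, hv⟩ = ((k + 1 : ℕ) : ℕ∞)

/-!
For an ordered edge `uv` and a vertex set `W`, call `W` a candidate if every vertex of `W` is
within distance `k` of `u` or `v` inside `G[W]` and `W` contains a `k`-evine centred at `uv`; its
outer boundary is the set of vertices outside `W` adjacent to a vertex at `G[W]`-distance less
than `k` from `u` or `v`. Both notions only see `G[W ∪ T]` for `T` inside the boundary, and a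
candidate is the `k`-eball of `uv` (which is then `k`-central) exactly when its outer boundary is
empty. So, by inclusion–exclusion, the signed count of pairs `(W, T)` with `T` inside the outer
boundary of `W`, weighted by `(-1)^|T|`, counts the ordered `k`-central pairs. Split this count
by `j = |W ∪ T|`. For `j < n - ℓ` the `j`-th part is recovered from the `(n - ℓ)`-deck as in
Kelly's lemma, since each configuration lies in `C(n - j, n - ℓ - j)` cards. For `j ≥ n - ℓ` it
vanishes: an edge ball with at least `n - ℓ` vertices contains `n - ℓ` vertices closest to the
edge, which induce a forest of radius greater than `k` in which every vertex is within `k` of `u`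
or `v`, and such a forest has diameter exactly `2k + 1`.
-/

namespace SimpleGraph

variable {α β : Type*} {Γ : SimpleGraph α} {Γ' : SimpleGraph β}

lemma eccent_eq_eccent (v : α) : _root_.eccent Γ v = Γ.eccent v := rfl

lemma gdiam_eq_ediam : gdiam Γ = Γ.ediam := rfl

lemma gradius_eq_radius : gradius Γ = Γ.radius := rfl

lemma Hom.edist_le (f : Γ →g Γ') (u v : α) : Γ'.edist (f u) (f v) ≤ Γ.edist u v := by
  by_cases h : Γ.Reachable u v
  · obtain ⟨p, hp⟩ := h.exists_walk_length_eq_edist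
    simpa [hp] using (p.map f).edist_le
  · simp [edist_eq_top_of_not_reachable h]

lemma Iso.edist_eq (e : Γ ≃g Γ') (u v : α) : Γ'.edist (e u) (e v) = Γ.edist u v :=
  le_antisymm (e.toHom.edist_le u v) (by simpa using e.symm.toHom.edist_le (e u) (e v))

lemma Iso.eccent_eq (e : Γ ≃g Γ') (v : α) : Γ'.eccent (e v) = Γ.eccent v := by
  simp only [eccent_def]
  rw [← e.toEquiv.iSup_comp]
  exact iSup_congr fun w => e.edist_eq v w

lemma Iso.ediam_eq (e : Γ ≃g Γ') : Γ'.ediam = Γ.ediam := by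
  rw [ediam, ediam, ← e.toEquiv.iSup_comp]
  exact iSup_congr e.eccent_eq

lemma Iso.radius_eq (e : Γ ≃g Γ') : Γ'.radius = Γ.radius := by
  rw [radius, radius, ← e.toEquiv.iInf_comp]
  exact iInf_congr e.eccent_eq

lemma Walk.edist_add_edist_le_length [DecidableEq α] {x y z : α} (p : Γ.Walk x y)
    (hz : z ∈ p.support) : Γ.edist x z + Γ.edist z y ≤ p.length := by
  rw [← p.take_spec hz, Walk.length_append, Nat.cast_add]
  exact add_le_add (p.takeUntil z hz).edist_le (p.dropUntil z hz).edist_le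

lemma Walk.notMem_support_of_edist_lt {x y z : α} (p : Γ.Walk x y)
    (hp : p.length = Γ.edist x y) (h : Γ.edist x y < Γ.edist z y) : z ∉ p.support := by
  classical
  intro hz
  have := p.edist_add_edist_le_length hz
  rw [hp] at this
  exact (h.trans_le le_add_self).not_ge this

section restrict

variable {s W : Set α} {x y : α}

/-- Unlike `Γ.induce W`, this keeps the vertex type. -/
def restrict (Γ : SimpleGraph α) (W : Set α) : SimpleGraph α where
  Adj x y := Γ.Adj x y ∧ x ∈ W ∧ y ∈ W
  symm := ⟨fun _ _ h => ⟨h.1.symm, h.2.2, h.2.1⟩⟩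
  loopless := ⟨fun x h => Γ.loopless.irrefl x h.1⟩

@[simp] lemma restrict_adj : (Γ.restrict W).Adj x y ↔ Γ.Adj x y ∧ x ∈ W ∧ y ∈ W := Iff.rfl

lemma restrict_le : Γ.restrict W ≤ Γ := fun _ _ h => h.1

lemma restrict_restrict (h : W ⊆ s) : (Γ.restrict s).restrict W = Γ.restrict W := by
  ext x y
  simp only [restrict_adj]
  exact ⟨fun h' => ⟨h'.1.1, h'.2⟩, fun h' => ⟨⟨h'.1, h h'.2.1, h h'.2.2⟩, h'.2⟩⟩

lemma mem_of_reachable_restrict (h : (Γ.restrict W).Reachable x y) (hx : x ∈ W) : y ∈ W := by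
  obtain ⟨p⟩ := h
  induction p with
  | nil => exact hx
  | cons hadj _ ih => exact ih hadj.2.2

def Iso.restrict (e : Γ ≃g Γ') (W : Set α) : Γ.restrict W ≃g Γ'.restrict (e '' W) where
  toEquiv := e.toEquiv
  map_rel_iff' := by
    intro x y
    simp only [restrict_adj]
    exact and_congr e.map_adj_iff (and_congr (e.injective.mem_set_image) e.injective.mem_set_image)

lemma edist_restrict_le_edist_induce (x y : W) :
    (Γ.restrict W).edist x y ≤ (Γ.induce W).edist x y :=
  Hom.edist_le (⟨Subtype.val, fun {a b} h => ⟨h, a.2, b.2⟩⟩ : Γ.induce W →g Γ.restrict W) x y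

open scoped Classical in
noncomputable def Iso.restrictOfInduce [Finite α] {Δ : SimpleGraph α} {t : Set α}
    (ψ : Γ.induce s ≃g Δ.induce t) : Γ.restrict s ≃g Δ.restrict t where
  toEquiv := ψ.toEquiv.extendSubtype
  map_rel_iff' := by
    intro x y
    have hmem : ∀ z, ψ.toEquiv.extendSubtype z ∈ t ↔ z ∈ s := fun z =>
      ⟨fun h => by_contra fun hz => ψ.toEquiv.extendSubtype_not_mem z hz h,
        ψ.toEquiv.extendSubtype_mem z⟩
    simp only [restrict_adj, hmem]
    refine and_congr_left fun ⟨hx, hy⟩ => ?_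
    rw [ψ.toEquiv.extendSubtype_apply_of_mem x hx, ψ.toEquiv.extendSubtype_apply_of_mem y hy]
    exact ψ.map_adj_iff (v := ⟨x, hx⟩) (w := ⟨y, hy⟩)

end restrict

section edgeBall

variable {Γ₁ Γ₂ : SimpleGraph α} {u v x : α} {r : ℕ∞}

/-- An open ball: `Γ.edgeBall u v (k + 1)` is the vertex set of `kEball Γ u v k`. -/
def edgeBall (Γ : SimpleGraph α) (u v : α) (r : ℕ∞) : Set α := Γ.ball u r ∪ Γ.ball v r

lemma mem_edgeBall : x ∈ Γ.edgeBall u v r ↔ Γ.edist x u < r ∨ Γ.edist x v < r := Iff.rfl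

lemma edgeBall_comm : Γ.edgeBall u v r = Γ.edgeBall v u r := Set.union_comm _ _

lemma edgeBall_anti (h : Γ₁ ≤ Γ₂) : Γ₁.edgeBall u v r ⊆ Γ₂.edgeBall u v r :=
  Set.union_subset_union (fun _ hx => (edist_anti h).trans_lt hx)
    (fun _ hx => (edist_anti h).trans_lt hx)

lemma Iso.apply_mem_edgeBall_iff (e : Γ ≃g Γ') :
    e x ∈ Γ'.edgeBall (e u) (e v) r ↔ x ∈ Γ.edgeBall u v r := by
  simp only [mem_edgeBall, e.edist_eq]

lemma mem_edgeBall_add_one_of_adj {w : α} {k : ℕ} (hw : w ∈ Γ.edgeBall u v k) (h : Γ.Adj w x) :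
    x ∈ Γ.edgeBall u v (k + 1) := by
  have step : ∀ c, Γ.edist w c < k → Γ.edist x c < k + 1 := fun c hc =>
    calc Γ.edist x c ≤ Γ.edist x w + Γ.edist w c := SimpleGraph.edist_triangle
      _ = Γ.edist w c + 1 := by rw [edist_eq_one_iff_adj.mpr h.symm, add_comm]
      _ < k + 1 := by
          rw [ENat.lt_add_one_iff (ENat.natCast_ne_top k)]
          exact Order.add_one_le_of_lt hc
  exact hw.imp (step u) (step v)

end edgeBall

lemma edist_induce_le_of_forall_mem {s : Set α} {x c : α} (hx : x ∈ s) (hc : c ∈ s)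
    (hs : ∀ z, Γ.edist z c < Γ.edist x c → z ∈ s) :
    (Γ.induce s).edist ⟨x, hx⟩ ⟨c, hc⟩ ≤ Γ.edist x c := by
  classical
  by_cases h : Γ.Reachable x c
  · obtain ⟨p, hp⟩ := h.exists_walk_length_eq_edist
    have hsupp : ∀ z ∈ p.support, z ∈ s := by
      intro z hz
      by_cases hzx : z = x
      · exact hzx ▸ hx
      · refine hs z ?_
        calc Γ.edist z c ≤ (p.dropUntil z hz).length := Walk.edist_le _
          _ < p.length := by exact_mod_cast Walk.length_dropUntil_lt_length hz hzx
          _ = Γ.edist x c := hp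
    calc _ ≤ ((p.induce s hsupp).length : ℕ∞) := Walk.edist_le _
      _ = Γ.edist x c := by
          have hlen := congrArg Walk.length (p.map_induce hsupp)
          rw [Walk.length_map] at hlen
          rw [← hp]
          exact_mod_cast hlen
  · simp [edist_eq_top_of_not_reachable h]

lemma ball_subset_ball_restrict {W : Set α} {c : α} {r : ℕ∞} (h : Γ.ball c r ⊆ W) :
    Γ.ball c r ⊆ (Γ.restrict W).ball c r := by
  intro x hx
  have hc : c ∈ W := h (mem_ball_self (pos_of_gt hx))
  have hxW : x ∈ W := h hx
  calc (Γ.restrict W).edist x c ≤ (Γ.induce W).edist ⟨x, hxW⟩ ⟨c, hc⟩ :=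
        edist_restrict_le_edist_induce _ _
    _ ≤ Γ.edist x c := edist_induce_le_of_forall_mem hxW hc fun z hz => h (hz.trans hx)
    _ < r := hx

lemma walk_start_mem_and_edist_le {W : Set α} {c x : α} {k : ℕ} (hc : c ∈ W)
    (hW : ∀ w ∈ W, (Γ.restrict W).edist w c < k → ∀ y, Γ.Adj w y → y ∈ W) :
    ∀ p : Γ.Walk x c, p.length ≤ k → x ∈ W ∧ (Γ.restrict W).edist x c ≤ p.length := by
  intro p
  induction p with
  | nil => exact fun _ => ⟨hc, by simp⟩
  | @cons x y _ hxy q ih =>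
    intro hlen
    rw [Walk.length_cons] at hlen
    obtain ⟨hy, hyc⟩ := ih hc hW (by omega)
    have hx : x ∈ W := hW y hy (hyc.trans_lt (by exact_mod_cast hlen)) x hxy.symm
    refine ⟨hx, ?_⟩
    calc (Γ.restrict W).edist x _ ≤ (Γ.restrict W).edist x y + (Γ.restrict W).edist y _ :=
          SimpleGraph.edist_triangle
      _ ≤ 1 + q.length :=
          add_le_add (edist_eq_one_iff_adj.mpr (restrict_adj.mpr ⟨hxy, hx, hy⟩)).le hyc
      _ = (q.cons hxy).length := by rw [Walk.length_cons, Nat.cast_add, add_comm, Nat.cast_one]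

lemma ball_add_one_subset_of_forall_adj {W : Set α} {c : α} {k : ℕ} (hc : c ∈ W)
    (hW : ∀ w ∈ W, w ∈ (Γ.restrict W).ball c k → ∀ y, Γ.Adj w y → y ∈ W) :
    Γ.ball c (k + 1) ⊆ W := by
  intro x hx
  rw [mem_ball, ENat.lt_add_one_iff (ENat.natCast_ne_top k)] at hx
  obtain ⟨p, hp⟩ := exists_walk_of_edist_ne_top (hx.trans_lt (ENat.natCast_lt_top k)).ne
  exact (walk_start_mem_and_edist_le hc hW p (by exact_mod_cast hp ▸ hx)).1

section acyclic

variable {C : SimpleGraph β} {a b x y : β}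

/-- The hypotheses put `x` on the side of `b` and `y` on the side of `a`, so every path from `x`
to `y` crosses the bridge `ab`. -/
lemma IsAcyclic.edist_add_edist_le (hC : C.IsAcyclic) (hab : C.Adj a b)
    (hx : C.edist x b < C.edist x a) (hy : C.edist y a < C.edist y b) :
    C.edist x a + C.edist a y ≤ C.edist x y := by
  classical
  by_cases hr : C.Reachable x y
  · obtain ⟨p, hp⟩ := hr.exists_walk_length_eq_edist
    rw [← hp]
    refine p.edist_add_edist_le_length (by_contra fun ha => ?_)
    rw [SimpleGraph.edist_comm (u := y), SimpleGraph.edist_comm (u := y)] at hy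
    rw [SimpleGraph.edist_comm (u := x), SimpleGraph.edist_comm (u := x)] at hx
    obtain ⟨q₁, hq₁⟩ := exists_walk_of_edist_ne_top (hy.trans_le le_top).ne
    obtain ⟨q₂, hq₂⟩ := exists_walk_of_edist_ne_top (hx.trans_le le_top).ne
    have hb₁ := q₁.notMem_support_of_edist_lt hq₁ hy
    have ha₂ := q₂.notMem_support_of_edist_lt hq₂ hx
    have hmem := isBridge_iff_forall_walk_mem_edges.mp
      (isAcyclic_iff_forall_adj_isBridge.mp hC hab) (q₁.append (p.reverse.append q₂.reverse))
    simp only [Walk.edges_append, Walk.edges_reverse, List.mem_append, List.mem_reverse] at hmem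
    rcases hmem with h | h | h
    · exact hb₁ (q₁.snd_mem_support_of_mem_edges h)
    · exact ha (p.fst_mem_support_of_mem_edges h)
    · exact ha₂ (q₂.fst_mem_support_of_mem_edges h)
  · simp [edist_eq_top_of_not_reachable hr]

lemma IsAcyclic.ediam_eq_of_adj (hC : C.IsAcyclic) (hab : C.Adj a b) {k : ℕ}
    (hball : ∀ x, C.edist x a ≤ k ∨ C.edist x b ≤ k)
    (ha : k < C.eccent a) (hb : k < C.eccent b) : C.ediam = (2 * k + 1 : ℕ) := by
  have hnear : ∀ x, ∃ c, (c = a ∨ c = b) ∧ C.edist c x ≤ k := fun x => by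
    rcases hball x with h | h
    exacts [⟨a, .inl rfl, SimpleGraph.edist_comm.trans_le h⟩,
      ⟨b, .inr rfl, SimpleGraph.edist_comm.trans_le h⟩]
  refine le_antisymm (ediam_le_iff.mpr fun x y => ?_) ?_
  · obtain ⟨c, hc, hcx⟩ := hnear x
    obtain ⟨c', hc', hcy⟩ := hnear y
    have hcc : C.edist c c' ≤ 1 := by
      rcases hc with rfl | rfl <;> rcases hc' with rfl | rfl <;>
        simp [edist_le_one_iff_adj_or_eq, hab, hab.symm]
    calc C.edist x y ≤ C.edist x c + (C.edist c c' + C.edist c' y) :=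
          SimpleGraph.edist_triangle.trans (add_le_add le_rfl SimpleGraph.edist_triangle)
      _ ≤ k + (1 + k) := add_le_add (SimpleGraph.edist_comm.trans_le hcx) (add_le_add hcc hcy)
      _ = (2 * k + 1 : ℕ) := by push_cast; ring
  · obtain ⟨x, hx⟩ := lt_iSup_iff.mp ha
    obtain ⟨y, hy⟩ := lt_iSup_iff.mp hb
    replace hx : (k : ℕ∞) < C.edist x a := hx.trans_eq SimpleGraph.edist_comm
    replace hy : (k : ℕ∞) < C.edist y b := hy.trans_eq SimpleGraph.edist_comm
    have hxb : C.edist x b ≤ k := (hball x).resolve_left hx.not_ge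
    have hya : C.edist y a ≤ k := (hball y).resolve_right hy.not_ge
    have hay : (k : ℕ∞) ≤ C.edist a y := by
      rw [SimpleGraph.edist_comm]
      obtain ⟨m, hm⟩ := ENat.ne_top_iff_exists.mp (hya.trans_lt (ENat.natCast_lt_top k)).ne
      have : (k : ℕ∞) + 1 ≤ m + 1 :=
        calc _ ≤ C.edist y b := Order.add_one_le_of_lt hy
          _ ≤ C.edist y a + C.edist a b := SimpleGraph.edist_triangle
          _ = m + 1 := by rw [hm, edist_eq_one_iff_adj.mpr hab]
      rw [← hm]
      exact_mod_cast Nat.le_of_add_le_add_right (by exact_mod_cast this : k + 1 ≤ m + 1)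
    calc ((2 * k + 1 : ℕ) : ℕ∞) = (k + 1) + k := by push_cast; ring
      _ ≤ C.edist x a + C.edist a y := add_le_add (Order.add_one_le_of_lt hx) hay
      _ ≤ C.edist x y := hC.edist_add_edist_le hab (hxb.trans_lt hx) (hya.trans_lt hy)
      _ ≤ C.ediam := edist_le_ediam

end acyclic

end SimpleGraph

open Finset

theorem Finset.exists_subset_card_eq_forall_le {β γ : Type*} [LinearOrder γ] (f : β → γ)
    {t : Finset β} {m : ℕ} (hm : m ≤ #t) :
    ∃ s ⊆ t, #s = m ∧ ∀ x ∈ s, ∀ y ∈ t, y ∉ s → f x ≤ f y := by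
  classical
  induction m with
  | zero => exact ⟨∅, empty_subset _, card_empty, by simp⟩
  | succ m ih =>
    obtain ⟨s, hst, hs, hmin⟩ := ih (by omega)
    obtain ⟨y, hy, hymin⟩ := (t \ s).exists_min_image f
      (by rw [← card_pos, card_sdiff_of_subset hst]; omega)
    obtain ⟨hyt, hys⟩ := mem_sdiff.mp hy
    refine ⟨insert y s, insert_subset hyt hst, by rw [card_insert_of_notMem hys, hs], ?_⟩
    intro x hx z hz hzs
    rw [mem_insert, not_or] at hzs
    rcases mem_insert.mp hx with rfl | hx
    · exact hymin z (mem_sdiff.mpr ⟨hz, hzs.2⟩)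
    · exact hmin x hx z hz hzs.2

namespace KCentral

open SimpleGraph

variable {α β : Type*} {Γ : SimpleGraph α} {Γ' : SimpleGraph β} {u v x : α} {k m : ℕ}
  {s W : Set α}

def IsAdmissible (k : ℕ) (C : SimpleGraph β) : Prop :=
  C.IsAcyclic ∧ (k : ℕ∞) < gradius C ∧ gdiam C ≠ ((2 * k + 1 : ℕ) : ℕ∞)

lemma IsAdmissible.of_iso {γ : Type*} {C : SimpleGraph β} {C' : SimpleGraph γ} (e : C ≃g C')
    (h : IsAdmissible k C) : IsAdmissible k C' := by
  obtain ⟨hacyc, hrad, hdiam⟩ := h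
  refine ⟨e.isAcyclic_iff.mp hacyc, ?_, ?_⟩
  · rwa [gradius_eq_radius, e.radius_eq]
  · rwa [gdiam_eq_ediam, e.ediam_eq]

/-- Take `m` vertices of the ball closest to `{u, v}`: geodesics to them stay inside. -/
lemma exists_card_eq_forall_edist_induce_le [Fintype α] (hm : 2 ≤ m) {A : Finset α}
    (hA : ↑A ⊆ Γ.edgeBall u v (k + 1)) (hcard : m ≤ #A) :
    ∃ s : Finset α, #s = m ∧ ∃ (hu : u ∈ s) (hv : v ∈ s), ∀ x : (s : Set α),
      (Γ.induce s).edist x ⟨u, hu⟩ ≤ k ∨ (Γ.induce s).edist x ⟨v, hv⟩ ≤ k := by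
  classical
  set ρ : α → ℕ∞ := fun x => min (Γ.edist x u) (Γ.edist x v)
  obtain ⟨s, hsB, hs, hmin⟩ := exists_subset_card_eq_forall_le ρ
    (t := {x | x ∈ Γ.edgeBall u v (k + 1)})
    (hcard.trans (card_le_card fun x hx => mem_filter.mpr ⟨mem_univ x, hA hx⟩))
  have hρk : ∀ x ∈ s, ρ x ≤ k := fun x hx => by
    have := (mem_filter.mp (hsB hx)).2
    rwa [mem_edgeBall, ← min_lt_iff, ENat.lt_add_one_iff (ENat.natCast_ne_top k)] at this
  have hlower : ∀ x ∈ s, ∀ y ∉ s, ρ x ≤ ρ y := fun x hx y hy => by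
    by_cases hyB : y ∈ ({x | x ∈ Γ.edgeBall u v (k + 1)} : Finset α)
    · exact hmin x hx y hyB hy
    · rw [mem_filter, mem_edgeBall, ← min_lt_iff, not_and, not_lt] at hyB
      exact (hρk x hx).trans (le_self_add.trans (hyB (mem_univ y)))
  have hcenter : ∀ c, (c = u ∨ c = v) → c ∈ s := by
    intro c hc
    by_contra hcs
    have hcases : ∀ x ∈ s, x ≠ c ∧ (x = u ∨ x = v) := fun x hx => by
      have hρc : ρ c = 0 := by rcases hc with rfl | rfl <;> simp [ρ]
      have := hρc ▸ hlower x hx c hcs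
      refine ⟨fun h => hcs (h ▸ hx), ?_⟩
      simpa [ρ, min_le_iff, edist_eq_zero_iff] using this
    have : #s ≤ 1 := card_le_one.mpr fun x hx y hy => by
      have := hcases x hx
      have := hcases y hy
      grind
    omega
  refine ⟨s, hs, hcenter u (.inl rfl), hcenter v (.inr rfl), fun ⟨x, hx⟩ => ?_⟩
  have hnear : ∀ c (hc : c ∈ s), (∀ z, ρ z ≤ Γ.edist z c) → ρ x = Γ.edist x c →
      (Γ.induce s).edist ⟨x, hx⟩ ⟨c, hc⟩ ≤ k := fun c hc hρc hxc => by
    refine (edist_induce_le_of_forall_mem hx hc fun z hz => ?_).trans (hxc ▸ hρk x hx)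
    by_contra hzs
    exact (hlower x hx z hzs).not_gt (hxc ▸ (hρc z).trans_lt hz)
  rcases le_total (Γ.edist x u) (Γ.edist x v) with h | h
  · exact .inl (hnear u _ (fun z => min_le_left _ _) (min_eq_left h))
  · exact .inr (hnear v _ (fun z => min_le_right _ _) (min_eq_right h))

lemma card_lt_of_subset_edgeBall [Fintype α] (hm : 2 ≤ m)
    (hΓ : ∀ s : Finset α, #s = m → IsAdmissible k (Γ.induce s)) (huv : Γ.Adj u v)
    {A : Finset α} (hA : ↑A ⊆ Γ.edgeBall u v (k + 1)) : #A < m := by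
  by_contra! hcard
  obtain ⟨s, hs, hu, hv, hnear⟩ := exists_card_eq_forall_edist_induce_le hm hA hcard
  obtain ⟨hacyc, hrad, hdiam⟩ := hΓ s hs
  exact hdiam (hacyc.ediam_eq_of_adj (a := ⟨u, hu⟩) (b := ⟨v, hv⟩) (induce_adj.mpr huv) hnear
    (hrad.trans_le radius_le_eccent) (hrad.trans_le radius_le_eccent))


lemma mem_kEball_verts {w : α} :
    w ∈ (kEball Γ u v k).verts ↔ w ∈ Γ.edgeBall u v (k + 1) := by
  simp only [kEball, Subgraph.induce_verts, Set.mem_ofPred_eq, mem_edgeBall,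
    ENat.lt_add_one_iff (ENat.natCast_ne_top k), SimpleGraph.edist_comm (u := w)]

def HasCentralEvineIn (k : ℕ) (Γ : SimpleGraph α) (u v : α) (W : Set α) : Prop :=
  ∃ (B : Γ.Subgraph) (hu : u ∈ B.verts) (hv : v ∈ B.verts), B.verts ⊆ W ∧ IsEvine k B.coe ∧
    B.Adj u v ∧ _root_.eccent B.coe ⟨u, hu⟩ = ((k + 1 : ℕ) : ℕ∞) ∧
    _root_.eccent B.coe ⟨v, hv⟩ = ((k + 1 : ℕ) : ℕ∞)

lemma isKCentralEdge_iff :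
    IsKCentralEdge k Γ u v ↔ HasCentralEvineIn k Γ u v (Γ.edgeBall u v (k + 1)) := by
  constructor
  · rintro ⟨-, B, hu, hv, hle, rest⟩
    exact ⟨B, hu, hv, fun w hw => mem_kEball_verts.mp (hle.1 hw), rest⟩
  · rintro ⟨B, hu, hv, hsub, rest⟩
    refine ⟨B.adj_sub rest.2.1, B, hu, hv, ⟨fun w hw => mem_kEball_verts.mpr (hsub hw), ?_⟩, rest⟩
    exact fun x y h => ⟨mem_kEball_verts.mpr (hsub (B.edge_vert h)),
      mem_kEball_verts.mpr (hsub (B.edge_vert h.symm)), B.adj_sub h⟩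

namespace HasCentralEvineIn

lemma adj (h : HasCentralEvineIn k Γ u v W) : Γ.Adj u v :=
  let ⟨B, _, _, _, _, hadj, _⟩ := h
  B.adj_sub hadj

lemma left_mem (h : HasCentralEvineIn k Γ u v W) : u ∈ W :=
  let ⟨_, hu, _, hsub, _⟩ := h
  hsub hu

lemma symm (h : HasCentralEvineIn k Γ u v W) : HasCentralEvineIn k Γ v u W :=
  let ⟨B, hu, hv, hsub, hev, hadj, hecu, hecv⟩ := h
  ⟨B, hv, hu, hsub, hev, hadj.symm, hecv, hecu⟩

lemma of_adj_imp {Γ₂ : SimpleGraph α} (h : HasCentralEvineIn k Γ u v W)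
    (hadj : ∀ x ∈ W, ∀ y ∈ W, Γ.Adj x y → Γ₂.Adj x y) : HasCentralEvineIn k Γ₂ u v W := by
  obtain ⟨B, hu, hv, hsub, rest⟩ := h
  exact ⟨⟨B.verts, B.Adj, fun h => hadj _ (hsub (B.edge_vert h)) _ (hsub (B.edge_vert h.symm))
    (B.adj_sub h), B.edge_vert, B.symm⟩, hu, hv, hsub, rest⟩

lemma image (e : Γ ≃g Γ') (h : HasCentralEvineIn k Γ u v W) :
    HasCentralEvineIn k Γ' (e u) (e v) (e '' W) := by
  obtain ⟨B, hu, hv, hsub, ⟨htree, hdiam⟩, hadj, hecu, hecv⟩ := h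
  let φ := e.toCopy.isoSubgraphMap B
  refine ⟨B.map e.toHom, ⟨u, hu, rfl⟩, ⟨v, hv, rfl⟩, Set.image_mono hsub,
    ⟨φ.isTree_iff.mp htree, ?_⟩, ⟨u, v, hadj, rfl, rfl⟩, ?_, ?_⟩
  · rwa [gdiam_eq_ediam, φ.ediam_eq]
  · rw [← hecu, eccent_eq_eccent, eccent_eq_eccent, ← φ.eccent_eq]; rfl
  · rw [← hecv, eccent_eq_eccent, eccent_eq_eccent, ← φ.eccent_eq]; rfl

end HasCentralEvineIn

lemma hasCentralEvineIn_image_iff (e : Γ ≃g Γ') :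
    HasCentralEvineIn k Γ' (e u) (e v) (e '' W) ↔ HasCentralEvineIn k Γ u v W := by
  refine ⟨fun h => ?_, HasCentralEvineIn.image e⟩
  simpa [Set.image_image] using h.image e.symm

def IsCandidate (k : ℕ) (Γ : SimpleGraph α) (u v : α) (W : Set α) : Prop :=
  W ⊆ (Γ.restrict W).edgeBall u v (k + 1) ∧ HasCentralEvineIn k Γ u v W

def outerBoundary (k : ℕ) (Γ : SimpleGraph α) (u v : α) (W : Set α) : Set α :=
  {x | x ∉ W ∧ ∃ w ∈ W, w ∈ (Γ.restrict W).edgeBall u v k ∧ Γ.Adj w x}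

lemma IsCandidate.subset_edgeBall (h : IsCandidate k Γ u v W) :
    W ⊆ Γ.edgeBall u v (k + 1) :=
  h.1.trans (edgeBall_anti restrict_le)

lemma outerBoundary_subset_edgeBall : outerBoundary k Γ u v W ⊆ Γ.edgeBall u v (k + 1) :=
  fun _ ⟨_, _, _, hw, hadj⟩ => mem_edgeBall_add_one_of_adj (edgeBall_anti restrict_le hw) hadj

lemma isCandidate_edgeBall (h : IsKCentralEdge k Γ u v) :
    IsCandidate k Γ u v (Γ.edgeBall u v (k + 1)) :=
  ⟨Set.union_subset_union (ball_subset_ball_restrict Set.subset_union_left)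
    (ball_subset_ball_restrict Set.subset_union_right), isKCentralEdge_iff.mp h⟩

lemma outerBoundary_edgeBall : outerBoundary k Γ u v (Γ.edgeBall u v (k + 1)) = ∅ :=
  Set.eq_empty_of_forall_notMem fun _ ⟨hx, _, _, hw, hadj⟩ =>
    hx (mem_edgeBall_add_one_of_adj (edgeBall_anti restrict_le hw) hadj)

/-- Grow the ball outwards from `u` and `v` one layer at a time. -/
lemma IsCandidate.eq_edgeBall (h : IsCandidate k Γ u v W) (hb : outerBoundary k Γ u v W = ∅) :
    W = Γ.edgeBall u v (k + 1) := by
  have hclosed : ∀ w ∈ W, w ∈ (Γ.restrict W).edgeBall u v k → ∀ y, Γ.Adj w y → y ∈ W :=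
    fun w hw hwk y hadj => by_contra fun hy => (Set.eq_empty_iff_forall_notMem.mp hb) y
      ⟨hy, w, hw, hwk, hadj⟩
  refine h.subset_edgeBall.antisymm (Set.union_subset ?_ ?_)
  · exact ball_add_one_subset_of_forall_adj h.2.left_mem
      fun w hw hwk => hclosed w hw (.inl hwk)
  · exact ball_add_one_subset_of_forall_adj h.2.symm.left_mem
      fun w hw hwk => hclosed w hw (.inr hwk)

lemma isCandidate_and_outerBoundary_eq_empty_iff :
    IsCandidate k Γ u v W ∧ outerBoundary k Γ u v W = ∅ ↔
      IsKCentralEdge k Γ u v ∧ W = Γ.edgeBall u v (k + 1) := by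
  constructor
  · rintro ⟨h, hb⟩
    have hW := h.eq_edgeBall hb
    exact ⟨isKCentralEdge_iff.mpr (hW ▸ h.2), hW⟩
  · rintro ⟨h, rfl⟩
    exact ⟨isCandidate_edgeBall h, outerBoundary_edgeBall⟩

lemma isCandidate_image_iff (e : Γ ≃g Γ') :
    IsCandidate k Γ' (e u) (e v) (e '' W) ↔ IsCandidate k Γ u v W := by
  refine and_congr ?_ (hasCentralEvineIn_image_iff e)
  rw [Set.image_subset_iff]
  exact forall₂_congr fun x _ => (e.restrict W).apply_mem_edgeBall_iff

lemma apply_mem_outerBoundary_iff (e : Γ ≃g Γ') :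
    e x ∈ outerBoundary k Γ' (e u) (e v) (e '' W) ↔ x ∈ outerBoundary k Γ u v W := by
  simp only [outerBoundary, Set.mem_ofPred_eq, e.injective.mem_set_image, Set.exists_mem_image,
    e.map_adj_iff]
  exact and_congr_right fun _ => exists_congr fun w => and_congr_right fun _ =>
    and_congr_left fun _ => (e.restrict W).apply_mem_edgeBall_iff

lemma isCandidate_restrict_iff (hW : W ⊆ s) :
    IsCandidate k (Γ.restrict s) u v W ↔ IsCandidate k Γ u v W := by
  rw [IsCandidate, IsCandidate, restrict_restrict hW]
  refine and_congr_right fun _ => ⟨fun h => h.of_adj_imp fun _ _ _ _ hadj => hadj.1,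
    fun h => h.of_adj_imp fun x hx y hy hadj => ⟨hadj, hW hx, hW hy⟩⟩

lemma mem_outerBoundary_restrict_iff (hW : W ⊆ s) (hx : x ∈ s) :
    x ∈ outerBoundary k (Γ.restrict s) u v W ↔ x ∈ outerBoundary k Γ u v W := by
  simp only [outerBoundary, Set.mem_ofPred_eq, restrict_restrict hW, restrict_adj]
  exact and_congr_right fun _ => exists_congr fun w => and_congr_right fun hw =>
    and_congr_right fun _ => ⟨fun h => h.1, fun h => ⟨h, hW hw, hx⟩⟩

lemma outerBoundary_restrict_subset : outerBoundary k (Γ.restrict s) u v W ⊆ s :=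
  fun _ ⟨_, _, _, _, hadj⟩ => hadj.2.2

lemma IsCandidate.subset_of_restrict (h : IsCandidate k (Γ.restrict s) u v W) : W ⊆ s := by
  have huv := h.2.adj
  intro x hx
  have hreach : ∀ c, c ∈ s → ((Γ.restrict s).restrict W).edist x c < k + 1 → x ∈ s :=
    fun c hc hxc => mem_of_reachable_restrict
      ((reachable_of_edist_ne_top (hxc.trans_le le_top).ne).mono restrict_le).symm hc
  exact (h.1 hx).elim (hreach u huv.2.1) (hreach v huv.2.2)

section counting

open scoped Classical

noncomputable def weight (k : ℕ) (Γ : SimpleGraph α) (u v : α) (W T : Finset α) : ℤ :=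
  if IsCandidate k Γ u v W ∧ ↑T ⊆ outerBoundary k Γ u v W then (-1) ^ #T else 0

noncomputable def signedCount [Fintype α] (k : ℕ) (Γ : SimpleGraph α) (j : ℕ) : ℤ :=
  ∑ u, ∑ v, ∑ W : Finset α, ∑ T : Finset α, if #(W ∪ T) = j then weight k Γ u v W T else 0

lemma weight_map (e : Γ ≃g Γ') (W T : Finset α) :
    weight k Γ' (e u) (e v) (W.map e.toEquiv.toEmbedding) (T.map e.toEquiv.toEmbedding) =
      weight k Γ u v W T := by
  have hW : IsCandidate k Γ' (e u) (e v) ↑(W.map e.toEquiv.toEmbedding) ↔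
      IsCandidate k Γ u v W := by
    rw [coe_map]
    exact isCandidate_image_iff e
  have hT : ↑(T.map e.toEquiv.toEmbedding) ⊆
      outerBoundary k Γ' (e u) (e v) ↑(W.map e.toEquiv.toEmbedding) ↔
      ↑T ⊆ outerBoundary k Γ u v W := by
    rw [coe_map, coe_map, Set.image_subset_iff]
    exact forall₂_congr fun x _ => apply_mem_outerBoundary_iff e
  rw [weight, weight, card_map]
  exact if_congr (and_congr hW hT) rfl rfl

lemma signedCount_eq_of_iso [Fintype α] [Fintype β] (e : Γ ≃g Γ') (j : ℕ) :
    signedCount k Γ j = signedCount k Γ' j := by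
  refine Fintype.sum_equiv e.toEquiv _ _ fun u => Fintype.sum_equiv e.toEquiv _ _ fun v =>
    Fintype.sum_equiv e.toEquiv.finsetCongr _ _ fun W =>
    Fintype.sum_equiv e.toEquiv.finsetCongr _ _ fun T => ?_
  simp only [Equiv.finsetCongr_apply, ← map_union, card_map]
  exact (if_congr Iff.rfl (weight_map e W T).symm rfl)

lemma weight_restrict (s W T : Finset α) :
    weight k (Γ.restrict s) u v W T = if W ∪ T ⊆ s then weight k Γ u v W T else 0 := by
  split_ifs with h
  · obtain ⟨hW, hT⟩ := union_subset_iff.mp h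
    have hT' : ↑T ⊆ outerBoundary k (Γ.restrict s) u v W ↔ ↑T ⊆ outerBoundary k Γ u v W :=
      forall₂_congr fun x hx => mem_outerBoundary_restrict_iff (coe_subset.mpr hW) (hT hx)
    exact if_congr (and_congr (isCandidate_restrict_iff (coe_subset.mpr hW)) hT') rfl rfl
  · refine if_neg fun ⟨hc, hT⟩ => h (coe_subset.mp ?_)
    rw [coe_union]
    exact Set.union_subset hc.subset_of_restrict (hT.trans outerBoundary_restrict_subset)

lemma sum_weight_eq_ite [Fintype α] (W : Finset α) :
    ∑ T : Finset α, weight k Γ u v W T =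
      if IsCandidate k Γ u v W ∧ outerBoundary k Γ u v W = ∅ then 1 else 0 := by
  by_cases hc : IsCandidate k Γ u v W
  · set B : Finset α := {x | x ∈ outerBoundary k Γ u v W}
    have hB : outerBoundary k Γ u v W = ∅ ↔ B = ∅ := by
      simp [B, Set.eq_empty_iff_forall_notMem, filter_eq_empty_iff]
    calc ∑ T : Finset α, weight k Γ u v W T
        = ∑ T, if T ∈ B.powerset then (-1 : ℤ) ^ #T else 0 := by
          refine sum_congr rfl fun T _ => if_congr ?_ rfl rfl
          simp [hc, B, Set.subset_def, subset_iff]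
      _ = ∑ T ∈ B.powerset, (-1 : ℤ) ^ #T := by rw [sum_ite_mem, univ_inter]
      _ = _ := by
          rw [sum_powerset_neg_one_pow_card, if_congr ((and_iff_right hc).trans hB) rfl rfl]
  · simp [weight, hc]

lemma sum_sum_weight [Fintype α] :
    ∑ W : Finset α, ∑ T : Finset α, weight k Γ u v W T =
      if IsKCentralEdge k Γ u v then 1 else 0 := by
  simp only [sum_weight_eq_ite, isCandidate_and_outerBoundary_eq_empty_iff]
  by_cases h : IsKCentralEdge k Γ u v
  · have hW : ∀ W : Finset α,
        ↑W = Γ.edgeBall u v (k + 1) ↔ W = (Γ.edgeBall u v (k + 1)).toFinset := fun W => by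
      rw [← coe_inj, Set.coe_toFinset]
    simp [h, hW]
  · simp [h]

lemma sum_signedCount [Fintype α] :
    ∑ j ∈ range (Fintype.card α + 1), signedCount k Γ j =
      ∑ u, ∑ v, if IsKCentralEdge k Γ u v then 1 else 0 := by
  have hj : ∀ u v (W T : Finset α),
      ∑ j ∈ range (Fintype.card α + 1), (if #(W ∪ T) = j then weight k Γ u v W T else 0) =
        weight k Γ u v W T := fun u v W T => by
    rw [sum_ite_eq, if_pos (mem_range.mpr (Nat.lt_succ_of_le (card_le_univ _)))]
  simp only [signedCount]
  rw [sum_comm]; refine sum_congr rfl fun u _ => ?_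
  rw [sum_comm]; refine sum_congr rfl fun v _ => ?_
  rw [← sum_sum_weight, sum_comm]; refine sum_congr rfl fun W _ => ?_
  rw [sum_comm]; exact sum_congr rfl fun T _ => hj u v W T

lemma sum_signedCount_restrict [Fintype α] {j m : ℕ} (hj : j ≤ m) :
    ∑ s ∈ (univ : Finset α).powersetCard m, signedCount k (Γ.restrict ↑s) j =
      ((Fintype.card α - j).choose (m - j) : ℤ) * signedCount k Γ j := by
  have hterm : ∀ u v (W T : Finset α), ∑ s ∈ (univ : Finset α).powersetCard m,
      (if #(W ∪ T) = j then (if W ∪ T ⊆ s then weight k Γ u v W T else 0) else 0) =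
      ((Fintype.card α - j).choose (m - j) : ℤ) *
        (if #(W ∪ T) = j then weight k Γ u v W T else 0) := fun u v W T => by
    split_ifs with h
    · rw [← sum_filter, sum_const, card_filter_powersetCard_subset _ _ _ (subset_univ _) (h ▸ hj),
        card_univ, h, nsmul_eq_mul]
    · simp
  simp only [signedCount, weight_restrict, mul_sum]
  rw [sum_comm]; refine sum_congr rfl fun u _ => ?_
  rw [sum_comm]; refine sum_congr rfl fun v _ => ?_
  rw [sum_comm]; refine sum_congr rfl fun W _ => ?_
  rw [sum_comm]; exact sum_congr rfl fun T _ => hterm u v W T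

lemma signedCount_eq_zero [Fintype α] {m j : ℕ} (hm : 2 ≤ m)
    (hΓ : ∀ s : Finset α, #s = m → IsAdmissible k (Γ.induce s)) (hj : m ≤ j) :
    signedCount k Γ j = 0 := by
  refine sum_eq_zero fun u _ => sum_eq_zero fun v _ => sum_eq_zero fun W _ =>
    sum_eq_zero fun T _ => ite_eq_right_iff.mpr fun hWT => if_neg fun ⟨hc, hT⟩ => ?_
  have hsub : ↑(W ∪ T) ⊆ Γ.edgeBall u v (k + 1) := by
    rw [coe_union]
    exact Set.union_subset hc.subset_edgeBall (hT.trans outerBoundary_subset_edgeBall)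
  have := card_lt_of_subset_edgeBall hm hΓ hc.2.adj hsub
  omega

end counting

lemma _root_.IsKCentralEdge.symm (h : IsKCentralEdge k Γ u v) : IsKCentralEdge k Γ v u := by
  rw [isKCentralEdge_iff] at h ⊢
  rw [edgeBall_comm]
  exact h.symm

def centralEdgeGraph (k : ℕ) (Γ : SimpleGraph α) : SimpleGraph α where
  Adj := IsKCentralEdge k Γ
  symm := ⟨fun _ _ => IsKCentralEdge.symm⟩
  loopless := ⟨fun _ h => h.1.ne rfl⟩

open scoped Classical in
lemma two_mul_natCard_eq_sum [Fintype α] :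
    2 * (Nat.card {e : Sym2 α // ∃ u v, e = s(u, v) ∧ IsKCentralEdge k Γ u v} : ℤ) =
      ∑ u, ∑ v, if IsKCentralEdge k Γ u v then 1 else 0 := by
  have hcard : Nat.card {e : Sym2 α // ∃ u v, e = s(u, v) ∧ IsKCentralEdge k Γ u v} =
      #(centralEdgeGraph k Γ).edgeFinset := by
    rw [edgeFinset_card, ← Nat.card_eq_fintype_card]
    refine Nat.card_congr (Equiv.subtypeEquivRight fun e => ?_)
    induction e using Sym2.ind with
    | h a b =>
      refine ⟨fun ⟨u, v, he, huv⟩ => ?_, fun h => ⟨a, b, rfl, h⟩⟩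
      rcases Sym2.eq_iff.mp he with ⟨rfl, rfl⟩ | ⟨rfl, rfl⟩
      exacts [huv, huv.symm]
  rw [hcard, ← Nat.cast_ofNat, ← Nat.cast_mul, ← sum_degrees_eq_twice_card_edges]
  push_cast
  refine sum_congr rfl fun u _ => ?_
  rw [← card_neighborFinset_eq_degree, neighborFinset_eq_filter, sum_boole]
  rfl

variable {n : ℕ} {G H : SimpleGraph (Fin n)}

lemma _root_.SameDeck.isAdmissible (hdeck : SameDeck G H m)
    (hG : ∀ s : Finset (Fin n), #s = m → IsAdmissible k (G.induce s)) :
    ∀ t : Finset (Fin n), #t = m → IsAdmissible k (H.induce t) := by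
  obtain ⟨φ, hφ⟩ := hdeck
  intro t ht
  obtain ⟨ψ⟩ := hφ (φ.symm ⟨t, ht⟩)
  rw [Equiv.apply_symm_apply] at ψ
  exact (hG _ (φ.symm ⟨t, ht⟩).2).of_iso ψ

lemma _root_.SameDeck.signedCount_eq (hdeck : SameDeck G H m) {j : ℕ} (hj : j ≤ m) (hm : m ≤ n) :
    signedCount k G j = signedCount k H j := by
  obtain ⟨φ, hφ⟩ := hdeck
  have hsum : ∑ s ∈ (univ : Finset (Fin n)).powersetCard m, signedCount k (G.restrict ↑s) j =
      ∑ s ∈ (univ : Finset (Fin n)).powersetCard m, signedCount k (H.restrict ↑s) j := by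
    rw [sum_subtype _ (fun _ => mem_powersetCard_univ)
        (fun s : Finset (Fin n) => signedCount k (G.restrict ↑s) j),
      sum_subtype _ (fun _ => mem_powersetCard_univ)
        (fun s : Finset (Fin n) => signedCount k (H.restrict ↑s) j)]
    calc ∑ s : {s : Finset (Fin n) // #s = m}, signedCount k (G.restrict ↑s.1) j
        = ∑ s : {s : Finset (Fin n) // #s = m}, signedCount k (H.restrict ↑(φ s).1) j :=
          sum_congr rfl fun s _ => (hφ s).elim fun ψ => signedCount_eq_of_iso ψ.restrictOfInduce j
      _ = _ := φ.sum_comp fun s => signedCount k (H.restrict ↑s.1) j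
  rw [sum_signedCount_restrict hj, sum_signedCount_restrict hj] at hsum
  refine mul_left_cancel₀ ?_ hsum
  exact_mod_cast (Nat.choose_pos (by simp; omega)).ne'

end KCentral

theorem num_kcentral_edges_determined_general (n k ℓ : ℕ)
    (hn : 2 * k + 2 ≤ n - ℓ)
    (G H : SimpleGraph (Fin n)) (hdeck : SameDeck G H (n - ℓ))
    (hcards : ∀ s : Finset (Fin n), s.card = n - ℓ →
      (SimpleGraph.induce (↑s : Set (Fin n)) G).IsAcyclic ∧
      (k : ℕ∞) < gradius (SimpleGraph.induce (↑s : Set (Fin n)) G) ∧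
      gdiam (SimpleGraph.induce (↑s : Set (Fin n)) G) ≠ ((2 * k + 1 : ℕ) : ℕ∞)) :
    Nat.card {e : Sym2 (Fin n) // ∃ u v, e = s(u, v) ∧ IsKCentralEdge k G u v} =
      Nat.card {e : Sym2 (Fin n) // ∃ u v, e = s(u, v) ∧ IsKCentralEdge k H u v} := by
  have hm : 2 ≤ n - ℓ := by omega
  have hcardsH := hdeck.isAdmissible hcards
  have hcount : ∀ j, KCentral.signedCount k G j = KCentral.signedCount k H j := fun j => by
    rcases le_or_gt (n - ℓ) j with hj | hj
    · rw [KCentral.signedCount_eq_zero hm hcards hj, KCentral.signedCount_eq_zero hm hcardsH hj]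
    · exact hdeck.signedCount_eq hj.le (Nat.sub_le n ℓ)
  have h2 : 2 * (Nat.card {e : Sym2 (Fin n) // ∃ u v, e = s(u, v) ∧ IsKCentralEdge k G u v} : ℤ) =
      2 * Nat.card {e : Sym2 (Fin n) // ∃ u v, e = s(u, v) ∧ IsKCentralEdge k H u v} := by
    simp only [KCentral.two_mul_natCard_eq_sum, ← KCentral.sum_signedCount, hcount]
  omega

/-- If `2k+2 ≤ n-ℓ`, `G` and `H` have the same `(n-ℓ)`-deck, and every `(n-ℓ)`-vertex
induced subgraph of `G` is acyclic, has radius greater than `k`, and does not have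
diameter `2k+1`, then `G` and `H` have the same number of `k`-central edges. -/
theorem num_kcentral_edges_determined (n k ℓ : ℕ) (hℓ : 1 ≤ ℓ) (hk : 1 ≤ k)
    (hn : 2 * k + 2 ≤ n - ℓ)
    (G H : SimpleGraph (Fin n)) (hdeck : SameDeck G H (n - ℓ))
    (hcards : ∀ s : Finset (Fin n), s.card = n - ℓ →
      (SimpleGraph.induce (↑s : Set (Fin n)) G).IsAcyclic ∧
      (k : ℕ∞) < gradius (SimpleGraph.induce (↑s : Set (Fin n)) G) ∧
      gdiam (SimpleGraph.induce (↑s : Set (Fin n)) G) ≠ ((2 * k + 1 : ℕ) : ℕ∞)) :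
    Nat.card {e : Sym2 (Fin n) // ∃ u v, e = s(u, v) ∧ IsKCentralEdge k G u v} =
      Nat.card {e : Sym2 (Fin n) // ∃ u v, e = s(u, v) ∧ IsKCentralEdge k H u v} :=
  num_kcentral_edges_determined_general n k ℓ hn G H hdeck hcards
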